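/- arXiv:0809.1264 — 2 statements merged into one kernel-verified Lean document; each statement's English description precedes it below -/
import Mathlib

section
/- If p is a source with p(1) ≥ 2/3, then the minimum maximum pointwise redundancy is exactly R*_opt(p) = 1 + lg p(1). -/
/-- A source: a positive, monotonically nonincreasing probability mass function on `Fin n`. -/
def IsSource (n : ℕ) (p : Fin n → ℝ) : Prop :=
  (∀ i, 0 < p i) ∧ (∑ i, p i = 1) ∧ (∀ i j : Fin n, i ≤ j → p j ≤ p i)

/-- A codeword-length vector: positive integer lengths satisfying the Kraft inequality. -/
def IsCLV (n : ℕ) (l : Fin n → ℤ) : Prop :=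
  (∀ i, 1 ≤ l i) ∧ (∑ i, (2:ℝ) ^ (-(l i)) ≤ 1)

/-- Maximum pointwise redundancy `R*(l,p) = max_i (l(i) + lg p(i))`. -/
noncomputable def Rstar (n : ℕ) (l : Fin n → ℤ) (p : Fin n → ℝ) : ℝ :=
  ⨆ i : Fin n, ((l i : ℝ) + Real.logb 2 (p i))

/-- Minimum maximum pointwise redundancy over all codeword-length vectors. -/
noncomputable def RstarOpt (n : ℕ) (p : Fin n → ℝ) : ℝ :=
  sInf {r : ℝ | ∃ l : Fin n → ℤ, IsCLV n l ∧ Rstar n l p = r}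

/-!
Every codeword length is at least `1`, so `R*(l,p) ≥ l(1) + lg p(1) ≥ 1 + lg p(1)` for every
admissible `l`. Conversely the lengths `l(i) = ⌊1 + lg (p(1) / p(i))⌋` have `l(1) = 1`, pointwise
redundancy at most `1 + lg p(1)`, and `2^{-l(i)} ≤ p(i) / p(1)`; their Kraft sum is therefore at
most `1/2 + (1 - p(1)) / p(1)`, which is `≤ 1` exactly when `p(1) ≥ 2/3`.
-/

open Real

section Rstar

variable {n : ℕ} (l : Fin n → ℤ) (p : Fin n → ℝ)

theorem le_Rstar (i : Fin n) : (l i : ℝ) + logb 2 (p i) ≤ Rstar n l p :=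
  le_ciSup (f := fun i => (l i : ℝ) + logb 2 (p i)) (Set.finite_range _).bddAbove i

theorem Rstar_eq_of_forall_le_of_eq {r : ℝ} (a : Fin n)
    (hle : ∀ i, (l i : ℝ) + logb 2 (p i) ≤ r) (heq : (l a : ℝ) + logb 2 (p a) = r) :
    Rstar n l p = r :=
  have : Nonempty (Fin n) := ⟨a⟩
  le_antisymm (ciSup_le hle) (heq ▸ le_Rstar l p a)

theorem one_add_logb_le_Rstar {l : Fin n → ℤ} (hl : IsCLV n l) (i : Fin n) :
    1 + logb 2 (p i) ≤ Rstar n l p := by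
  have : (1 : ℝ) ≤ l i := by exact_mod_cast hl.1 i
  linarith [le_Rstar l p i]

end Rstar

theorem two_zpow_neg_floor_one_add_le (x : ℝ) : (2 : ℝ) ^ (-⌊1 + x⌋) ≤ (2 : ℝ) ^ (-x) := by
  rw [← Real.rpow_intCast]
  apply Real.rpow_le_rpow_of_exponent_le one_le_two
  push_cast
  linarith [Int.sub_one_lt_floor (1 + x)]

section AnchoredLengths

variable {n : ℕ} (p : Fin n → ℝ) (a : Fin n)

noncomputable def anchoredLengths : Fin n → ℤ :=
  fun i => ⌊1 + (logb 2 (p a) - logb 2 (p i))⌋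

@[simp]
theorem anchoredLengths_self : anchoredLengths p a a = 1 := by
  simp [anchoredLengths]

variable {p a}

theorem anchoredLengths_add_logb_le (i : Fin n) :
    (anchoredLengths p a i : ℝ) + logb 2 (p i) ≤ 1 + logb 2 (p a) := by
  have := Int.floor_le (1 + (logb 2 (p a) - logb 2 (p i)))
  unfold anchoredLengths
  linarith

theorem one_le_anchoredLengths (hpos : ∀ i, 0 < p i) (hmax : ∀ i, p i ≤ p a) (i : Fin n) :
    1 ≤ anchoredLengths p a i := by
  have : logb 2 (p i) ≤ logb 2 (p a) := logb_le_logb_of_le one_lt_two (hpos i) (hmax i)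
  exact Int.le_floor.mpr (by push_cast; linarith)

theorem two_zpow_neg_anchoredLengths_le (hpos : ∀ i, 0 < p i) (i : Fin n) :
    (2 : ℝ) ^ (-anchoredLengths p a i) ≤ p i / p a := by
  refine (two_zpow_neg_floor_one_add_le _).trans_eq ?_
  rw [neg_sub, Real.rpow_sub two_pos, Real.rpow_logb two_pos (by norm_num) (hpos i),
    Real.rpow_logb two_pos (by norm_num) (hpos a)]

theorem isCLV_anchoredLengths (hpos : ∀ i, 0 < p i) (hsum : ∑ i, p i = 1)
    (hmax : ∀ i, p i ≤ p a) (ha : 2 / 3 ≤ p a) : IsCLV n (anchoredLengths p a) := by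
  refine ⟨one_le_anchoredLengths hpos hmax, ?_⟩
  have hrest : ∑ i ∈ Finset.univ.erase a, p i = 1 - p a := by
    rw [← hsum, ← Finset.add_sum_erase _ _ (Finset.mem_univ a), add_sub_cancel_left]
  have hbound : ∑ i ∈ Finset.univ.erase a, (2 : ℝ) ^ (-anchoredLengths p a i) ≤ (1 - p a) / p a :=
    calc _ ≤ ∑ i ∈ Finset.univ.erase a, p i / p a :=
          Finset.sum_le_sum fun i _ => two_zpow_neg_anchoredLengths_le hpos i
      _ = (1 - p a) / p a := by rw [← Finset.sum_div, hrest]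
  have hhalf : (1 - p a) / p a ≤ 1 / 2 := by
    rw [div_le_div_iff₀ (hpos a) two_pos]
    linarith
  have hfirst : (2 : ℝ) ^ (-anchoredLengths p a a) = 1 / 2 := by simp
  rw [← Finset.add_sum_erase _ _ (Finset.mem_univ a), hfirst]
  linarith

end AnchoredLengths

theorem stmt2 (n : ℕ) (hn : 2 ≤ n) (p : Fin n → ℝ) (hp : IsSource n p)
    (h1 : 2/3 ≤ p ⟨0, by omega⟩) :
    RstarOpt n p = 1 + Real.logb 2 (p ⟨0, by omega⟩) := by
  obtain ⟨hpos, hsum, hmono⟩ := hp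
  set a : Fin n := ⟨0, by omega⟩
  have hmax : ∀ i, p i ≤ p a := fun i => hmono a i (Nat.zero_le i)
  refine IsLeast.csInf_eq ⟨⟨anchoredLengths p a, isCLV_anchoredLengths hpos hsum hmax h1, ?_⟩, ?_⟩
  · refine Rstar_eq_of_forall_le_of_eq _ p a anchoredLengths_add_logb_le ?_
    simp
  · rintro r ⟨l, hl, rfl⟩
    exact one_add_logb_le_Rstar p hl a
end

section
/- Let λ ≥ 2 be an integer and let p be a source with 2^{−λ} ≤ p(1) < 2/(2^λ + 1). Then R*_opt(p) < 1 + lg((1 − p(1))/(1 − 2^{−λ})). -/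
/-!
Give the first symbol length `λ` and every other symbol the Shannon length `⌈-lg (c p(i))⌉` of
the rescaled source `c p`, where `c = (1 - 2^{-λ}) / (1 - p(1))`. The Kraft sum is then at most
`2^{-λ} + c (1 - p(1)) = 1`, every rescaled symbol has pointwise redundancy below `1 - lg c`, which
is the claimed bound, and for the first symbol `λ + lg p(1) < 1 - lg c` amounts to
`p(1) (2^λ + 1) < 2`.
-/

open Real Finset

theorem RstarOpt_le_Rstar {n : ℕ} (p : Fin n → ℝ) {l : Fin n → ℤ} (hl : IsCLV n l) :
    RstarOpt n p ≤ Rstar n l p := by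
  refine csInf_le ⟨Rstar n 1 p, ?_⟩ ⟨l, hl, rfl⟩
  rintro _ ⟨l', hl', rfl⟩
  refine ciSup_mono (Set.finite_range _).bddAbove fun i => ?_
  simpa using (Int.cast_le (R := ℝ)).mpr (hl'.1 i)

theorem Rstar_lt_of_forall_lt {n : ℕ} [NeZero n] {l : Fin n → ℤ} {p : Fin n → ℝ} {B : ℝ}
    (h : ∀ i, (l i : ℝ) + logb 2 (p i) < B) : Rstar n l p < B := by
  obtain ⟨i, hi⟩ := exists_eq_ciSup_of_finite (f := fun i => (l i : ℝ) + logb 2 (p i))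
  rw [Rstar, ← hi]
  exact h i

theorem two_zpow_neg_ceil_neg_logb_le {x : ℝ} (hx : 0 < x) : (2 : ℝ) ^ (-⌈-logb 2 x⌉) ≤ x := by
  calc (2 : ℝ) ^ (-⌈-logb 2 x⌉) = 2 ^ ((-⌈-logb 2 x⌉ : ℤ) : ℝ) := (rpow_intCast 2 _).symm
    _ ≤ 2 ^ logb 2 x := by
      apply rpow_le_rpow_of_exponent_le one_le_two
      push_cast
      linarith [Int.le_ceil (-logb 2 x)]
    _ = x := rpow_logb two_pos (by norm_num) hx

theorem ceil_neg_logb_add_logb_lt_one (x : ℝ) : (⌈-logb 2 x⌉ : ℝ) + logb 2 x < 1 := by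
  linarith [Int.ceil_lt_add_one (-logb 2 x)]

theorem one_le_ceil_neg_logb {x : ℝ} (hx0 : 0 < x) (hx1 : x < 1) : 1 ≤ ⌈-logb 2 x⌉ := by
  have : 0 < -logb 2 x := neg_pos.mpr (logb_neg one_lt_two hx0 hx1)
  exact Int.ceil_pos.mpr this

section Pinned

variable {n : ℕ} (p : Fin n → ℝ) (i₀ : Fin n) (m : ℤ)

noncomputable def pinnedScale : ℝ := (1 - (2 : ℝ) ^ (-m)) / (1 - p i₀)

noncomputable def pinnedShannonLengths : Fin n → ℤ :=
  Function.update (fun i => ⌈-logb 2 (pinnedScale p i₀ m * p i)⌉) i₀ m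

variable {p i₀ m}

@[simp]
theorem pinnedShannonLengths_self : pinnedShannonLengths p i₀ m i₀ = m :=
  Function.update_self ..

theorem pinnedShannonLengths_of_ne {i : Fin n} (hi : i ≠ i₀) :
    pinnedShannonLengths p i₀ m i = ⌈-logb 2 (pinnedScale p i₀ m * p i)⌉ :=
  Function.update_of_ne hi ..

theorem pinnedScale_pos (hm : 1 ≤ m) (hp₀ : p i₀ < 1) : 0 < pinnedScale p i₀ m := by
  have : (2 : ℝ) ^ (-m) < 1 := zpow_lt_one_of_neg₀ one_lt_two (by omega)
  exact div_pos (by linarith) (by linarith)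

theorem pinnedScale_mul_sum_erase (hsum : ∑ i, p i = 1) (hp₀ : p i₀ < 1) :
    pinnedScale p i₀ m * ∑ i ∈ univ.erase i₀, p i = 1 - (2 : ℝ) ^ (-m) := by
  rw [sum_erase_eq_sub (mem_univ i₀), hsum, pinnedScale, div_mul_cancel₀ _ (by linarith)]

theorem isCLV_pinnedShannonLengths (hpos : ∀ i, 0 < p i) (hsum : ∑ i, p i = 1) (hm : 1 ≤ m)
    (hp₀ : p i₀ < 1) : IsCLV n (pinnedShannonLengths p i₀ m) := by
  set c := pinnedScale p i₀ m
  have hc : 0 < c := pinnedScale_pos hm hp₀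
  have hrest := pinnedScale_mul_sum_erase (m := m) hsum hp₀
  have hlen : ∀ i ∈ univ.erase i₀, (2 : ℝ) ^ (-pinnedShannonLengths p i₀ m i) ≤ c * p i :=
    fun i hi => pinnedShannonLengths_of_ne (ne_of_mem_erase hi) ▸
      two_zpow_neg_ceil_neg_logb_le (mul_pos hc (hpos i))
  refine ⟨fun i => ?_, ?_⟩
  · rcases eq_or_ne i i₀ with rfl | hi
    · simpa using hm
    · have hle : c * p i ≤ c * ∑ j ∈ univ.erase i₀, p j :=
        mul_le_mul_of_nonneg_left
          (single_le_sum (fun j _ => (hpos j).le) (mem_erase.2 ⟨hi, mem_univ i⟩)) hc.le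
      rw [pinnedShannonLengths_of_ne hi]
      have : (0 : ℝ) < 2 ^ (-m) := by positivity
      exact one_le_ceil_neg_logb (mul_pos hc (hpos i)) (by linarith)
  · calc ∑ i, (2 : ℝ) ^ (-pinnedShannonLengths p i₀ m i)
        = 2 ^ (-m) + ∑ i ∈ univ.erase i₀, (2 : ℝ) ^ (-pinnedShannonLengths p i₀ m i) := by
          rw [← add_sum_erase _ _ (mem_univ i₀), pinnedShannonLengths_self]
      _ ≤ 2 ^ (-m) + c * ∑ i ∈ univ.erase i₀, p i := by
          rw [mul_sum]; gcongr with i hi; exact hlen i hi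
      _ = 1 := by rw [hrest]; ring

theorem pinnedShannonLengths_add_logb_lt {i : Fin n} (hi : i ≠ i₀) (hpi : 0 < p i) (hm : 1 ≤ m)
    (hp₀ : p i₀ < 1) :
    (pinnedShannonLengths p i₀ m i : ℝ) + logb 2 (p i) <
      1 + logb 2 ((1 - p i₀) / (1 - (2 : ℝ) ^ (-m))) := by
  have hc := pinnedScale_pos hm hp₀
  have h := ceil_neg_logb_add_logb_lt_one (pinnedScale p i₀ m * p i)
  have hmul := logb_mul hc.ne' hpi.ne' (b := 2)
  rw [pinnedShannonLengths_of_ne hi, ← inv_div, logb_inv, ← pinnedScale]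
  linarith

end Pinned

theorem natCast_add_logb_lt_one_add_logb {m : ℕ} (hm : 1 ≤ m) {x : ℝ} (hx : 0 < x)
    (h : x < 2 / ((2 : ℝ) ^ m + 1)) :
    (m : ℝ) + logb 2 x < 1 + logb 2 ((1 - x) / (1 - (2 : ℝ) ^ (-(m : ℤ)))) := by
  have h2m : (1 : ℝ) < 2 ^ m := one_lt_pow₀ one_lt_two (by omega)
  have hx2 : x * (2 ^ m + 1) < 2 := (lt_div_iff₀ (by positivity)).1 h
  have hinv : (2 : ℝ) ^ (-(m : ℤ)) = (2 ^ m)⁻¹ := by rw [zpow_neg, zpow_natCast]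
  have hgap : 0 < 1 - (2 : ℝ) ^ (-(m : ℤ)) := by rw [hinv]; linarith [inv_lt_one_of_one_lt₀ h2m]
  have key : 2 ^ m * x < 2 * ((1 - x) / (1 - (2 : ℝ) ^ (-(m : ℤ)))) := by
    have hcancel : (2 : ℝ) ^ m * x * (2 ^ m)⁻¹ = x := by field_simp
    rw [mul_div_assoc', lt_div_iff₀ hgap, hinv, mul_sub, mul_one, hcancel]
    linarith
  have := logb_lt_logb one_lt_two (by positivity) key
  rw [logb_mul (by positivity) hx.ne', logb_mul two_ne_zero (div_pos (by nlinarith) hgap).ne',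
    logb_pow, logb_self_eq_one one_lt_two] at this
  linarith

theorem stmt6 (n : ℕ) (hn : 2 ≤ n) (lam : ℕ) (hlam : 2 ≤ lam)
    (p : Fin n → ℝ) (hp : IsSource n p)
    (h2 : p ⟨0, by omega⟩ < 2 / ((2:ℝ) ^ lam + 1)) :
    RstarOpt n p < 1 + Real.logb 2 ((1 - p ⟨0, by omega⟩) / (1 - (2:ℝ) ^ (-(lam:ℤ)))) := by
  obtain ⟨hpos, hsum, -⟩ := hp
  have : NeZero n := ⟨by omega⟩
  set i₀ : Fin n := ⟨0, by omega⟩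
  have hm : (1 : ℤ) ≤ lam := by omega
  have hp₀ : p i₀ < 1 := by
    have : (1 : ℝ) < 2 ^ lam := one_lt_pow₀ one_lt_two (by omega)
    exact h2.trans ((div_lt_one (by positivity)).2 (by linarith))
  calc RstarOpt n p ≤ Rstar n (pinnedShannonLengths p i₀ lam) p :=
        RstarOpt_le_Rstar p (isCLV_pinnedShannonLengths hpos hsum hm hp₀)
    _ < _ := Rstar_lt_of_forall_lt fun i => by
      rcases eq_or_ne i i₀ with rfl | hi
      · simpa using natCast_add_logb_lt_one_add_logb (by omega) (hpos i₀) h2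
      · exact pinnedShannonLengths_add_logb_lt hi (hpos i) hm hp₀
end
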